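/- The relation ≼ is a partial order on T-atoms up to a.e. equality: for all T-atoms A, B, C, (reflexivity) A ⊆ F(A) a.e.; (transitivity) if A ⊆ F(B) a.e. and B ⊆ F(C) a.e. then A ⊆ F(C) a.e.; (antisymmetry) if A ⊆ F(B) a.e. and B ⊆ F(A) a.e. then A = B a.e. -/

import Mathlib

open MeasureTheory ENNReal Filter Set

noncomputable section

namespace PaperAtoms

variable {Ω : Type*} [MeasurableSpace Ω] {μ : MeasureTheory.Measure Ω} {p : ℝ≥0∞} [Fact (1 ≤ p)]

/-- `T` is a positive operator on `Lp`. -/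
def IsPositiveOp (T : Lp ℝ p μ →L[ℝ] Lp ℝ p μ) : Prop :=
  ∀ f : Lp ℝ p μ, 0 ≤ f → 0 ≤ T f

/-- A measurable set `A` is `T`-invariant if `T f` vanishes a.e. on `Aᶜ` for every
nonnegative `f ∈ Lp` vanishing a.e. on `Aᶜ`. -/
def Invariant (T : Lp ℝ p μ →L[ℝ] Lp ℝ p μ) (A : Set Ω) : Prop :=
  MeasurableSet A ∧
    ∀ f : Lp ℝ p μ, 0 ≤ f → (∀ᵐ x ∂μ, x ∉ A → f x = 0) → ∀ᵐ x ∂μ, x ∉ A → T f x = 0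

/-- `A` is `T`-co-invariant if `Aᶜ` is `T`-invariant. -/
def CoInvariant (T : Lp ℝ p μ →L[ℝ] Lp ℝ p μ) (A : Set Ω) : Prop :=
  Invariant T Aᶜ

/-- `A` is `T`-admissible if it belongs to the σ-field generated by the `T`-invariant sets. -/
def Admissible (T : Lp ℝ p μ →L[ℝ] Lp ℝ p μ) (A : Set Ω) : Prop :=
  MeasurableSet[MeasurableSpace.generateFrom {B : Set Ω | Invariant T B}] A

/-- A `T`-atom is a minimal `T`-admissible set with positive measure. -/
def Atom (T : Lp ℝ p μ →L[ℝ] Lp ℝ p μ) (A : Set Ω) : Prop :=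
  Admissible T A ∧ 0 < μ A ∧
    ∀ B : Set Ω, Admissible T B → B ≤ᵐ[μ] A → μ B = 0 ∨ B =ᵐ[μ] A

/-- `FA` is (a version of) the future of `A`: the minimal `T`-invariant set containing `A` a.e. -/
def IsFuture (T : Lp ℝ p μ →L[ℝ] Lp ℝ p μ) (A FA : Set Ω) : Prop :=
  Invariant T FA ∧ A ≤ᵐ[μ] FA ∧
    ∀ B : Set Ω, Invariant T B → A ≤ᵐ[μ] B → FA ≤ᵐ[μ] B

/-- `PA` is (a version of) the past of `A`: the minimal `T`-co-invariant set containing `A` a.e. -/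
def IsPast (T : Lp ℝ p μ →L[ℝ] Lp ℝ p μ) (A PA : Set Ω) : Prop :=
  CoInvariant T PA ∧ A ≤ᵐ[μ] PA ∧
    ∀ B : Set Ω, CoInvariant T B → A ≤ᵐ[μ] B → PA ≤ᵐ[μ] B

/-- `A` is `T`-convex if `A = F(A) ∩ P(A)` a.e. -/
def Convexe (T : Lp ℝ p μ →L[ℝ] Lp ℝ p μ) (A : Set Ω) : Prop :=
  MeasurableSet A ∧
    ∃ FA PA : Set Ω, IsFuture T A FA ∧ IsPast T A PA ∧ A =ᵐ[μ] (FA ∩ PA : Set Ω)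

/-- Multiplication by the indicator function of `A`, as a bounded operator on `Lp`
(defined as `0` if `A` is not measurable). -/
def indicatorCLM (μ : MeasureTheory.Measure Ω) (p : ℝ≥0∞) [Fact (1 ≤ p)] (A : Set Ω) :
    Lp ℝ p μ →L[ℝ] Lp ℝ p μ := by
  classical
  exact if hA : MeasurableSet A then
    LinearMap.mkContinuous
      { toFun := fun f => ((Lp.memLp f).indicator hA).toLp (A.indicator f)
        map_add' := fun f g => by
          rw [← MemLp.toLp_add]
          refine MemLp.toLp_congr _ _ ?_
          filter_upwards [Lp.coeFn_add f g] with x hx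
          simp only [Pi.add_apply, Set.indicator_apply, hx]
          split <;> simp
        map_smul' := fun c f => by
          rw [RingHom.id_apply, ← MemLp.toLp_const_smul]
          refine MemLp.toLp_congr _ _ ?_
          filter_upwards [Lp.coeFn_smul c f] with x hx
          simp only [Pi.smul_apply, Set.indicator_apply, hx, smul_eq_mul]
          split <;> simp }
      1
      (fun f => by
        simp only [LinearMap.coe_mk, AddHom.coe_mk, one_mul]
        rw [Lp.norm_toLp, Lp.norm_def]
        exact ENNReal.toReal_mono (Lp.eLpNorm_ne_top f) (eLpNorm_indicator_le _))
  else 0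

/-- The restriction `T_A = 1_A T 1_A` of `T` to a measurable set `A`. -/
def restrictOp (T : Lp ℝ p μ →L[ℝ] Lp ℝ p μ) (A : Set Ω) : Lp ℝ p μ →L[ℝ] Lp ℝ p μ :=
  (indicatorCLM μ p A).comp (T.comp (indicatorCLM μ p A))

/-- The spectral radius of a bounded operator, via Gelfand's formula
`ρ(T) = inf_n ‖Tⁿ‖^(1/n) = lim_n ‖Tⁿ‖^(1/n)`. -/
def specRadius (T : Lp ℝ p μ →L[ℝ] Lp ℝ p μ) : ℝ :=
  ⨅ n : ℕ, ‖T ^ (n + 1)‖ ^ (((n : ℝ) + 1)⁻¹)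

/-- The spectral radius `ρ(A)` of the restriction of `T` to `A`. -/
def rhoSet (T : Lp ℝ p μ →L[ℝ] Lp ℝ p μ) (A : Set Ω) : ℝ :=
  specRadius (restrictOp T A)

/-- A measurable set `A` with `μ A > 0` is `T`-irreducible if the restriction of `T` to `A`
is irreducible, i.e. every `T_A`-invariant subset of `A` is a.e. trivial. -/
def Irreducible (T : Lp ℝ p μ →L[ℝ] Lp ℝ p μ) (A : Set Ω) : Prop :=
  MeasurableSet A ∧ 0 < μ A ∧
    ∀ B : Set Ω, Invariant (restrictOp T A) B → B ≤ᵐ[μ] A → μ B = 0 ∨ B =ᵐ[μ] A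

/-- `T` is power compact if some power `T^k`, `k ≥ 1`, is a compact operator. -/
def PowerCompact (T : Lp ℝ p μ →L[ℝ] Lp ℝ p μ) : Prop :=
  ∃ k : ℕ, 1 ≤ k ∧ IsCompactOperator (⇑(T ^ k))

/-- `B ≼ A` for atoms: `B ⊆ F(A)` a.e. -/
def Prec (T : Lp ℝ p μ →L[ℝ] Lp ℝ p μ) (B A : Set Ω) : Prop :=
  ∃ FA : Set Ω, IsFuture T A FA ∧ B ≤ᵐ[μ] FA

/-- `B ≺ A` for atoms: `B ⊆ F(A)` a.e. and `B ≠ A` a.e. -/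
def PrecStrict (T : Lp ℝ p μ →L[ℝ] Lp ℝ p μ) (B A : Set Ω) : Prop :=
  Prec T B A ∧ ¬ (B =ᵐ[μ] A)

/-- A critical atom: a `T`-atom whose spectral radius equals that of `T`. -/
def CriticalAtom (T : Lp ℝ p μ →L[ℝ] Lp ℝ p μ) (A : Set Ω) : Prop :=
  Atom T A ∧ rhoSet T A = specRadius T

/-- There is a chain `A = A_0 ≻ A_1 ≻ ⋯ ≻ A_n` of critical atoms starting at `A`. -/
def ChainFrom (T : Lp ℝ p μ →L[ℝ] Lp ℝ p μ) (A : Set Ω) (n : ℕ) : Prop :=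
  ∃ c : ℕ → Set Ω, c 0 = A ∧ (∀ i ≤ n, CriticalAtom T (c i)) ∧
    ∀ i < n, PrecStrict T (c (i + 1)) (c i)

/-- The generalized eigenspace `⋃ₖ ker (T - λ id)^k` of `T` at `λ`. -/
def genEigenspace (T : Lp ℝ p μ →L[ℝ] Lp ℝ p μ) (l : ℝ) : Submodule ℝ (Lp ℝ p μ) :=
  ⨆ k : ℕ, LinearMap.ker (((T - l • (1 : Lp ℝ p μ →L[ℝ] Lp ℝ p μ)) ^ k) : Lp ℝ p μ →ₗ[ℝ] Lp ℝ p μ)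

/-- The algebraic multiplicity of `λ` for `T`. -/
def algMult (T : Lp ℝ p μ →L[ℝ] Lp ℝ p μ) (l : ℝ) : ℕ :=
  Module.finrank ℝ ↥(genEigenspace T l)

/-- The set of `k` at which the kernels of `(T - ρ(T) id)^k` stabilize; the ascent of `T`
at `ρ(T)` is its infimum. -/
def ascentSet (T : Lp ℝ p μ →L[ℝ] Lp ℝ p μ) : Set ℕ :=
  {k : ℕ | LinearMap.ker (((T - specRadius T • (1 : Lp ℝ p μ →L[ℝ] Lp ℝ p μ)) ^ k) : Lp ℝ p μ →ₗ[ℝ] Lp ℝ p μ)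
      = LinearMap.ker (((T - specRadius T • (1 : Lp ℝ p μ →L[ℝ] Lp ℝ p μ)) ^ (k + 1)) : Lp ℝ p μ →ₗ[ℝ] Lp ℝ p μ)}

/-- `D` is (a version of) the set `T(C)`, i.e. the support of `T(1_C f)` for any a.e.
positive `f ∈ Lp`. -/
def IsImage (T : Lp ℝ p μ →L[ℝ] Lp ℝ p μ) (C D : Set Ω) : Prop :=
  MeasurableSet C ∧ MeasurableSet D ∧
    ∀ f : Lp ℝ p μ, (∀ᵐ x ∂μ, 0 < f x) →
      D =ᵐ[μ] ({x | T (indicatorCLM μ p C f) x ≠ 0} : Set Ω)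

/-- `D` is (a version of) the `k`-fold iterated image `T^k(C)`. -/
def IsIterImage (T : Lp ℝ p μ →L[ℝ] Lp ℝ p μ) : ℕ → Set Ω → Set Ω → Prop
  | 0, C, D => D = C
  | (k + 1), C, D => ∃ E : Set Ω, IsIterImage T k C E ∧ IsImage T E D

/-!
Reflexivity and transitivity are the minimality of the future. For antisymmetry: an atom `A`
lies a.e. in exactly one of `S`, `Sᶜ` for every admissible `S`, and a.e. in a countable union
of admissible sets iff a.e. in one of them. By induction over the generated σ-field, the
admissible sets containing `A` a.e. are therefore determined by the invariant ones, which are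
those containing `F(A)`. If `A ⊆ F(B)` and `B ⊆ F(A)` a.e., the atoms `A` and `B` thus lie in
the same admissible sets, in particular each in the other.
-/

theorem measure_eq_zero_of_ae_le_of_ae_le_compl {A S : Set Ω} (h : A ≤ᵐ[μ] S)
    (hc : A ≤ᵐ[μ] (Sᶜ : Set Ω)) : μ A = 0 :=
  le_antisymm (by simpa using measure_mono_ae (ae_le_set_inter h hc)) (zero_le)

theorem ae_le_compl_iff_not_ae_le {A S : Set Ω} (hA : μ A ≠ 0)
    (hS : A ≤ᵐ[μ] S ∨ A ≤ᵐ[μ] (Sᶜ : Set Ω)) : A ≤ᵐ[μ] (Sᶜ : Set Ω) ↔ ¬ A ≤ᵐ[μ] S :=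
  ⟨fun hc h => hA (measure_eq_zero_of_ae_le_of_ae_le_compl h hc), hS.resolve_left⟩

theorem ae_le_iUnion_iff_exists {A : Set Ω} {s : ℕ → Set Ω} (hA : μ A ≠ 0)
    (hs : ∀ n, A ≤ᵐ[μ] s n ∨ A ≤ᵐ[μ] ((s n)ᶜ : Set Ω)) :
    A ≤ᵐ[μ] (⋃ n, s n : Set Ω) ↔ ∃ n, A ≤ᵐ[μ] s n := by
  refine ⟨fun h => ?_, fun ⟨n, hn⟩ => hn.trans (subset_iUnion s n).eventuallyLE⟩
  by_contra! hnone
  have hc : A ≤ᵐ[μ] ((⋃ n, s n)ᶜ : Set Ω) := by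
    filter_upwards [ae_all_iff.2 fun n => (hs n).resolve_left (hnone n)] with x hx hxA
    show x ∉ ⋃ n, s n
    rw [mem_iUnion]
    rintro ⟨n, hxn⟩
    exact hx n hxA hxn
  exact hA (measure_eq_zero_of_ae_le_of_ae_le_compl h hc)

theorem ae_le_iff_ae_le_of_generateFrom {C : Set (Set Ω)} {A B : Set Ω}
    (hA0 : μ A ≠ 0) (hB0 : μ B ≠ 0)
    (hA : ∀ S, MeasurableSet[MeasurableSpace.generateFrom C] S → A ≤ᵐ[μ] S ∨ A ≤ᵐ[μ] (Sᶜ : Set Ω))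
    (hB : ∀ S, MeasurableSet[MeasurableSpace.generateFrom C] S → B ≤ᵐ[μ] S ∨ B ≤ᵐ[μ] (Sᶜ : Set Ω))
    (hC : ∀ S ∈ C, A ≤ᵐ[μ] S ↔ B ≤ᵐ[μ] S) {S : Set Ω}
    (hS : MeasurableSet[MeasurableSpace.generateFrom C] S) : A ≤ᵐ[μ] S ↔ B ≤ᵐ[μ] S := by
  induction S, hS using MeasurableSpace.generateFrom_induction with
  | hC U hU _ => exact hC U hU
  | empty =>
    have not_ae_le_empty {X : Set Ω} (hX : μ X ≠ 0) : ¬ X ≤ᵐ[μ] (∅ : Set Ω) :=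
      fun h => hX (by simpa using ae_le_set.1 h)
    exact iff_of_false (not_ae_le_empty hA0) (not_ae_le_empty hB0)
  | compl U hU ih =>
    rw [ae_le_compl_iff_not_ae_le hA0 (hA U hU), ae_le_compl_iff_not_ae_le hB0 (hB U hU), ih]
  | iUnion s hs ih =>
    rw [ae_le_iUnion_iff_exists hA0 (fun n => hA _ (hs n)),
      ae_le_iUnion_iff_exists hB0 (fun n => hB _ (hs n))]
    exact exists_congr ih

theorem Atom.ae_le_or_ae_le_compl {T : Lp ℝ p μ →L[ℝ] Lp ℝ p μ} {A S : Set Ω}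
    (hA : Atom T A) (hS : Admissible T S) : A ≤ᵐ[μ] S ∨ A ≤ᵐ[μ] (Sᶜ : Set Ω) := by
  rcases hA.2.2 (A ∩ S) (hA.1.inter hS) inter_subset_left.eventuallyLE with h | h
  · right
    rwa [ae_le_set, sdiff_compl]
  · exact .inl (h.symm.le.trans inter_subset_right.eventuallyLE)

theorem Atom.ae_eq_of_ae_le_future {T : Lp ℝ p μ →L[ℝ] Lp ℝ p μ} {A B FA FB : Set Ω}
    (hA : Atom T A) (hB : Atom T B) (hFA : IsFuture T A FA) (hFB : IsFuture T B FB)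
    (hAB : A ≤ᵐ[μ] FB) (hBA : B ≤ᵐ[μ] FA) : A =ᵐ[μ] B := by
  have same_admissible (S : Set Ω) (hS : Admissible T S) : A ≤ᵐ[μ] S ↔ B ≤ᵐ[μ] S :=
    ae_le_iff_ae_le_of_generateFrom hA.2.1.ne' hB.2.1.ne'
      (fun _ => hA.ae_le_or_ae_le_compl) (fun _ => hB.ae_le_or_ae_le_compl)
      (fun U hU => ⟨fun h => hBA.trans (hFA.2.2 U hU h), fun h => hAB.trans (hFB.2.2 U hU h)⟩)
      hS
  exact ((same_admissible B hB.1).2 EventuallyLE.rfl).antisymm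
    ((same_admissible A hA.1).1 EventuallyLE.rfl)

variable {Ω : Type*} [MeasurableSpace Ω] {μ : MeasureTheory.Measure Ω} {p : ℝ≥0∞}

theorem statement14_general [Fact (1 ≤ p)]
    (T : Lp ℝ p μ →L[ℝ] Lp ℝ p μ) :
    (∀ A FA : Set Ω, Atom T A → IsFuture T A FA → A ≤ᵐ[μ] FA) ∧
    (∀ A B C FB FC : Set Ω, Atom T A → Atom T B → Atom T C →
      IsFuture T B FB → IsFuture T C FC → A ≤ᵐ[μ] FB → B ≤ᵐ[μ] FC → A ≤ᵐ[μ] FC) ∧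
    (∀ A B FA FB : Set Ω, Atom T A → Atom T B → IsFuture T A FA → IsFuture T B FB →
      A ≤ᵐ[μ] FB → B ≤ᵐ[μ] FA → A =ᵐ[μ] B) :=
  ⟨fun _ _ _ hFA => hFA.2.1,
    fun _ _ _ _ _ _ _ _ hFB hFC hAB hBC => hAB.trans (hFB.2.2 _ hFC.1 hBC),
    fun _ _ _ _ hA hB hFA hFB => hA.ae_eq_of_ae_le_future hB hFA hFB⟩

theorem statement14 [SigmaFinite μ] (hμ : μ Set.univ ≠ 0) [Fact (1 ≤ p)]
    (hp : 1 < p) (hp' : p ≠ ∞)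
    (T : Lp ℝ p μ →L[ℝ] Lp ℝ p μ) (hT : IsPositiveOp T) :
    (∀ A FA : Set Ω, Atom T A → IsFuture T A FA → A ≤ᵐ[μ] FA) ∧
    (∀ A B C FB FC : Set Ω, Atom T A → Atom T B → Atom T C →
      IsFuture T B FB → IsFuture T C FC → A ≤ᵐ[μ] FB → B ≤ᵐ[μ] FC → A ≤ᵐ[μ] FC) ∧
    (∀ A B FA FB : Set Ω, Atom T A → Atom T B → IsFuture T A FA → IsFuture T B FB →
      A ≤ᵐ[μ] FB → B ≤ᵐ[μ] FA → A =ᵐ[μ] B) :=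
  statement14_general T

end PaperAtoms
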